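/- Let Ω ⊂ ℝ^d be open and bounded, Γ ⊂ ℝ^s compact, U := Ω × Γ, and let u ∈ C²(Ω, Γ). Define (H, E, μ) ∈ ℳ(U, ℝ^{s×s} × ℝ^s × ℝ) by μ = δ_u, E = (Δu) δ_u with Δu the componentwise Laplacian, and H = (∑_{i=1}^d ∂_{x_i}u ⊗ ∂_{x_i}u) δ_u, i.e., ∫_U ⟨φ, dH⟩ := ∫_Ω ⟨φ(x, u(x)), ∑_{i=1}^d (∂_{x_i}u ⊗ ∂_{x_i}u)(x)⟩ dx for all φ ∈ C₀(U, ℝ^{s×s}). Then (H, E, μ) satisfies the Laplacian continuity equation −Δ_x μ − div_z E + div_z² H = 0 in the weak sense. -/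

import Mathlib

open MeasureTheory Filter Topology Set
open scoped ENNReal NNReal

noncomputable section

abbrev Euc (k : ℕ) := EuclideanSpace ℝ (Fin k)

/-- The `i`-th standard basis vector of `ℝ^k`. -/
def ex (k : ℕ) (i : Fin k) : Euc k := EuclideanSpace.single i 1

/-- The scalar test functions for the Laplacian continuity equation: twice continuously
differentiable `φ : Ω × Γ → ℝ` (on the ambient product space) with compact support in the
first variable contained in `Ω`. -/
def TestL (d s : ℕ) (Ω : Set (Euc d)) : Set ((Euc d × Euc s) → ℝ) :=
  {φ | ContDiff ℝ 2 φ ∧ ∃ K : Set (Euc d), IsCompact K ∧ K ⊆ Ω ∧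
    ∀ x z, x ∉ K → φ (x, z) = 0}

lemma euc_sum {s : ℕ} (w : Euc s) : w = ∑ k, w k • ex s k := by
  have := (EuclideanSpace.basisFun (Fin s) ℝ).sum_repr w
  simpa [ex, EuclideanSpace.basisFun_repr, EuclideanSpace.basisFun_apply] using this.symm

lemma prod_zero_sum {d s : ℕ} (w : Euc s) :
    ((0 : Euc d), w) = ∑ k, w k • ((0 : Euc d), ex s k) := by
  refine Prod.ext ?_ ?_
  · rw [Prod.fst_sum]; simp
  · rw [Prod.snd_sum]; simpa using euc_sum w

lemma expandF {d s : ℕ} (F : (Euc d × Euc s) →L[ℝ] ℝ) (w : Euc s) :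
    F ((0 : Euc d), w) = ∑ k, w k * F ((0 : Euc d), ex s k) := by
  rw [prod_zero_sum (d := d) w, map_sum]
  exact Finset.sum_congr rfl fun k _ => by rw [_root_.map_smul, smul_eq_mul]

lemma expandH {d s : ℕ} (H : (Euc d × Euc s) →L[ℝ] ((Euc d × Euc s) →L[ℝ] ℝ))
    (w w' : Euc s) :
    H ((0 : Euc d), w) ((0 : Euc d), w') =
      ∑ k, ∑ l, w k * w' l * (H ((0 : Euc d), ex s k) ((0 : Euc d), ex s l)) := by
  calc H ((0:Euc d), w) ((0:Euc d), w')
      = ∑ k, w k * (H ((0:Euc d), ex s k) ((0:Euc d), w')) := by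
        rw [prod_zero_sum (d := d) w, map_sum, ContinuousLinearMap.sum_apply]
        exact Finset.sum_congr rfl fun k _ => by
          rw [_root_.map_smul, ContinuousLinearMap.smul_apply, smul_eq_mul]
    _ = ∑ k, ∑ l, w k * w' l * (H ((0:Euc d), ex s k) ((0:Euc d), ex s l)) := by
        refine Finset.sum_congr rfl fun k _ => ?_
        rw [prod_zero_sum (d := d) w', map_sum, Finset.mul_sum]
        exact Finset.sum_congr rfl fun l _ => by rw [_root_.map_smul, smul_eq_mul]; ring

lemma key_int {d : ℕ} (v : Euc d) (h h' : Euc d → ℝ)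
    (hder : ∀ x, HasLineDerivAt ℝ h (h' x) x v)
    (hh : Integrable h) (hh' : Integrable h') :
    ∫ x, h' x = 0 := by
  have hg : ∀ x : Euc d, HasLineDerivAt ℝ (fun _ : Euc d => (1:ℝ)) ((0:Euc d →L[ℝ] ℝ) v) x v :=
    fun x => (hasFDerivAt_const (1:ℝ) x).hasLineDerivAt v
  have H := integral_bilinear_hasLineDerivAt_right_eq_neg_left_of_integrable
    (μ := (volume : Measure (Euc d))) (B := ContinuousLinearMap.mul ℝ ℝ)
    (f := h) (f' := h') (g := fun _ => (1:ℝ)) (g' := fun _ => (0:ℝ))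
    (by simpa using hh') (by simpa using (integrable_zero _ ℝ (volume : Measure (Euc d))))
    (by simpa using hh) (fun x _ => hder x) (fun x _ => by simpa using hg x)
  simpa using H.symm

lemma cont_glue {α β : Type*} [TopologicalSpace α] [TopologicalSpace β] [Zero β]
    {f : α → β} {Ω K : Set α} (hΩ : IsOpen Ω) (hK : IsClosed K) (hKΩ : K ⊆ Ω)
    (h1 : ContinuousOn f Ω) (h0 : ∀ x ∉ K, f x = 0) : Continuous f := by
  rw [continuous_iff_continuousAt]
  intro x
  by_cases hx : x ∈ Ω
  · exact h1.continuousAt (hΩ.mem_nhds hx)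
  · have hxK : x ∉ K := fun h => hx (hKΩ h)
    have hev : f =ᶠ[𝓝 x] fun _ => 0 :=
      Filter.eventuallyEq_of_mem (hK.isOpen_compl.mem_nhds hxK) (fun y hy => h0 y hy)
    exact ContinuousAt.congr continuousAt_const hev.symm

section defs
variable {d s : ℕ} (φ : Euc d × Euc s → ℝ) (u : Euc d → Euc s)

/-- `∂_{x_i} φ` along the graph. -/
def Af (i : Fin d) (x : Euc d) : ℝ := fderiv ℝ φ (x, u x) (ex d i, (0 : Euc s))

/-- derivative of `Af` in direction `e_i`. -/
def Ader (i : Fin d) (x : Euc d) : ℝ :=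
  fderiv ℝ (fderiv ℝ φ) (x, u x) (ex d i, fderiv ℝ u x (ex d i)) (ex d i, (0 : Euc s))

/-- `∇_z φ · ∂_{x_i} u` along the graph. -/
def Bf (i : Fin d) (x : Euc d) : ℝ :=
  fderiv ℝ φ (x, u x) ((0 : Euc d), fderiv ℝ u x (ex d i))

/-- derivative of `Bf` in direction `e_i`. -/
def Bder (i : Fin d) (x : Euc d) : ℝ :=
  fderiv ℝ φ (x, u x) ((0 : Euc d), fderiv ℝ (fderiv ℝ u) x (ex d i) (ex d i))
    + fderiv ℝ (fderiv ℝ φ) (x, u x) (ex d i, fderiv ℝ u x (ex d i))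
        ((0 : Euc d), fderiv ℝ u x (ex d i))

end defs

set_option maxHeartbeats 2000000 in
/-- Proposition 20: for `u ∈ C²(Ω, Γ)`, the triple of measures
`(H, E, μ) = ((∑_i ∂_{x_i}u ⊗ ∂_{x_i}u) δ_u, (Δu) δ_u, δ_u)` satisfies the Laplacian
continuity equation `−Δ_x μ − div_z E + div_z² H = 0` weakly, i.e.
`−∫ Δ_x φ dμ + ∫ ⟨∇_z φ, dE⟩ + ∫ ⟨∇_z² φ, dH⟩ = 0` for all scalar test functions `φ`;
the pairings are integrals over `Ω` along the graph of `u`. -/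
theorem stmt13 (d s : ℕ) (Ω : Set (Euc d)) (hΩo : IsOpen Ω) (hΩb : Bornology.IsBounded Ω)
    (Γ : Set (Euc s)) (hΓ : IsCompact Γ)
    (u : Euc d → Euc s) (hu2 : ContDiffOn ℝ 2 u Ω) (huΓ : Set.MapsTo u Ω Γ) :
    ∀ φ ∈ TestL d s Ω,
      -(∫ x in Ω, ∑ i : Fin d,
          (fderiv ℝ (fderiv ℝ φ) (x, u x) (ex d i, 0)) (ex d i, 0))
        + (∫ x in Ω, ∑ k : Fin s,
            fderiv ℝ φ (x, u x) ((0 : Euc d), ex s k)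
              * (∑ i : Fin d, ((fderiv ℝ (fderiv ℝ u) x (ex d i)) (ex d i)) k))
        + (∫ x in Ω, ∑ k : Fin s, ∑ l : Fin s,
            (fderiv ℝ (fderiv ℝ φ) (x, u x) ((0 : Euc d), ex s k)) ((0 : Euc d), ex s l)
              * (∑ i : Fin d, (fderiv ℝ u x (ex d i)) k * (fderiv ℝ u x (ex d i)) l))
        = 0 := by
  rintro φ ⟨hφ, K, hK, hKΩ, hφ0⟩
  -- smoothness of φ
  have hφ1 : ContDiff ℝ 1 (fderiv ℝ φ) := hφ.fderiv_right (by norm_num)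
  have hφ1d : Differentiable ℝ (fderiv ℝ φ) := hφ1.differentiable one_ne_zero
  have hφc2 : Continuous (fderiv ℝ (fderiv ℝ φ)) := hφ1.continuous_fderiv one_ne_zero
  have hKo : IsOpen Kᶜ := hK.isClosed.isOpen_compl
  -- vanishing off K
  have hzero1 : ∀ (x : Euc d) (z : Euc s), x ∉ K → fderiv ℝ φ (x, z) = 0 := by
    intro x z hx
    have hev : φ =ᶠ[𝓝 (x, z)] fun _ => (0:ℝ) := by
      have hm : (Kᶜ ×ˢ (univ : Set (Euc s))) ∈ 𝓝 (x, z) :=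
        (hKo.prod isOpen_univ).mem_nhds (by simp [hx])
      filter_upwards [hm] with p hp
      simpa using hφ0 p.1 p.2 hp.1
    rw [hev.fderiv_eq]; exact fderiv_const_apply 0
  have hzero2 : ∀ (x : Euc d) (z : Euc s), x ∉ K → fderiv ℝ (fderiv ℝ φ) (x, z) = 0 := by
    intro x z hx
    have hev : fderiv ℝ φ =ᶠ[𝓝 (x, z)] fun _ => (0 : (Euc d × Euc s) →L[ℝ] ℝ) := by
      have hm : (Kᶜ ×ˢ (univ : Set (Euc s))) ∈ 𝓝 (x, z) :=
        (hKo.prod isOpen_univ).mem_nhds (by simp [hx])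
      filter_upwards [hm] with p hp
      simpa using hzero1 p.1 p.2 hp.1
    rw [hev.fderiv_eq]; exact fderiv_const_apply 0
  -- smoothness of u on Ω
  have hud : ∀ x ∈ Ω, DifferentiableAt ℝ u x := fun x hx =>
    (hu2.contDiffAt (hΩo.mem_nhds hx)).differentiableAt (by norm_num)
  have hu1 : ContDiffOn ℝ 1 (fderiv ℝ u) Ω := hu2.fderiv_of_isOpen hΩo (by norm_num)
  have hu1c : ContinuousOn (fderiv ℝ u) Ω := hu1.continuousOn
  have hu1d : ∀ x ∈ Ω, DifferentiableAt ℝ (fderiv ℝ u) x := fun x hx =>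
    (hu1.contDiffAt (hΩo.mem_nhds hx)).differentiableAt one_ne_zero
  have hu2c : ContinuousOn (fderiv ℝ (fderiv ℝ u)) Ω :=
    hu1.continuousOn_fderiv_of_isOpen hΩo le_rfl
  have hGc : ContinuousOn (fun x : Euc d => (x, u x)) Ω :=
    continuousOn_id.prodMk hu2.continuousOn
  have hφGc : ContinuousOn (fun x : Euc d => fderiv ℝ φ (x, u x)) Ω :=
    hφ1.continuous.comp_continuousOn hGc
  have hφ2Gc : ContinuousOn (fun x : Euc d => fderiv ℝ (fderiv ℝ φ) (x, u x)) Ω :=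
    hφc2.comp_continuousOn hGc
  -- vanishing of the auxiliary functions off K
  have hA0 : ∀ (i : Fin d) (x : Euc d), x ∉ K → Af φ u i x = 0 := fun i x hx => by
    simp [Af, hzero1 x (u x) hx]
  have hA'0 : ∀ (i : Fin d) (x : Euc d), x ∉ K → Ader φ u i x = 0 := fun i x hx => by
    simp [Ader, hzero2 x (u x) hx]
  have hB0 : ∀ (i : Fin d) (x : Euc d), x ∉ K → Bf φ u i x = 0 := fun i x hx => by
    simp [Bf, hzero1 x (u x) hx]
  have hB'0 : ∀ (i : Fin d) (x : Euc d), x ∉ K → Bder φ u i x = 0 := fun i x hx => by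
    simp [Bder, hzero1 x (u x) hx, hzero2 x (u x) hx]
  -- line derivatives
  have hlineA : ∀ (i : Fin d) (x : Euc d),
      HasLineDerivAt ℝ (Af φ u i) (Ader φ u i x) x (ex d i) := by
    intro i x
    by_cases hx : x ∈ Ω
    · have hG : HasFDerivAt (fun y : Euc d => (y, u y))
          ((ContinuousLinearMap.id ℝ (Euc d)).prod (fderiv ℝ u x)) x :=
        (hasFDerivAt_id x).prodMk (hud x hx).hasFDerivAt
      have h1 : HasFDerivAt (fun p : Euc d × Euc s => fderiv ℝ φ p (ex d i, (0:Euc s)))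
          (((fderiv ℝ φ (x, u x)).comp (0 : (Euc d × Euc s) →L[ℝ] (Euc d × Euc s))) +
            (fderiv ℝ (fderiv ℝ φ) (x, u x)).flip (ex d i, (0:Euc s))) (x, u x) :=
        (hφ1d (x, u x)).hasFDerivAt.clm_apply (hasFDerivAt_const _ _)
      have h2 := h1.comp x hG
      have h3 := h2.hasLineDerivAt (ex d i)
      have h4 : HasLineDerivAt ℝ (Af φ u i) _ x (ex d i) := h3
      convert h4 using 1
      simp [Ader]
    · have hxK : x ∉ K := fun h => hx (hKΩ h)
      have hev : Af φ u i =ᶠ[𝓝 x] fun _ => (0:ℝ) := by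
        filter_upwards [hKo.mem_nhds hxK] with y hy
        exact hA0 i y hy
      have h0 : HasFDerivAt (Af φ u i) (0 : Euc d →L[ℝ] ℝ) x :=
        (hasFDerivAt_const (0:ℝ) x).congr_of_eventuallyEq hev
      have h3 := h0.hasLineDerivAt (ex d i)
      convert h3 using 1
      case e'_10 => simp [hA'0 i x hxK]
      all_goals rfl
  have hlineB : ∀ (i : Fin d) (x : Euc d),
      HasLineDerivAt ℝ (Bf φ u i) (Bder φ u i x) x (ex d i) := by
    intro i x
    by_cases hx : x ∈ Ω
    · have hG : HasFDerivAt (fun y : Euc d => (y, u y))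
          ((ContinuousLinearMap.id ℝ (Euc d)).prod (fderiv ℝ u x)) x :=
        (hasFDerivAt_id x).prodMk (hud x hx).hasFDerivAt
      have hc : HasFDerivAt (fun y : Euc d => fderiv ℝ φ (y, u y))
          ((fderiv ℝ (fderiv ℝ φ) (x, u x)).comp
            ((ContinuousLinearMap.id ℝ (Euc d)).prod (fderiv ℝ u x))) x :=
        (hφ1d (x, u x)).hasFDerivAt.comp x hG
      have hw : HasFDerivAt (fun y : Euc d => fderiv ℝ u y (ex d i))
          (((fderiv ℝ u x).comp (0 : Euc d →L[ℝ] Euc d)) +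
            (fderiv ℝ (fderiv ℝ u) x).flip (ex d i)) x :=
        (hu1d x hx).hasFDerivAt.clm_apply (hasFDerivAt_const _ _)
      have hz : HasFDerivAt (fun y : Euc d => ((0 : Euc d), fderiv ℝ u y (ex d i)))
          ((0 : Euc d →L[ℝ] Euc d).prod
            (((fderiv ℝ u x).comp (0 : Euc d →L[ℝ] Euc d)) +
              (fderiv ℝ (fderiv ℝ u) x).flip (ex d i))) x :=
        (hasFDerivAt_const (0 : Euc d) x).prodMk hw
      have h2 := hc.clm_apply hz
      have h3 := h2.hasLineDerivAt (ex d i)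
      have h4 : HasLineDerivAt ℝ (Bf φ u i) _ x (ex d i) := h3
      convert h4 using 1
      simp [Bder]
    · have hxK : x ∉ K := fun h => hx (hKΩ h)
      have hev : Bf φ u i =ᶠ[𝓝 x] fun _ => (0:ℝ) := by
        filter_upwards [hKo.mem_nhds hxK] with y hy
        exact hB0 i y hy
      have h0 : HasFDerivAt (Bf φ u i) (0 : Euc d →L[ℝ] ℝ) x :=
        (hasFDerivAt_const (0:ℝ) x).congr_of_eventuallyEq hev
      have h3 := h0.hasLineDerivAt (ex d i)
      convert h3 using 1
      case e'_10 => simp [hB'0 i x hxK]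
      all_goals rfl
  -- integrability helper
  have hInt : ∀ f : Euc d → ℝ, ContinuousOn f Ω → (∀ x ∉ K, f x = 0) → Integrable f :=
    fun f hc h0 => (cont_glue hΩo hK.isClosed hKΩ hc h0).integrable_of_hasCompactSupport
      (HasCompactSupport.intro hK h0)
  -- integrability of the four families
  have hintA : ∀ i : Fin d, Integrable (Af φ u i) := fun i =>
    hInt _ (hφGc.clm_apply continuousOn_const) (hA0 i)
  have hintA' : ∀ i : Fin d, Integrable (Ader φ u i) := fun i =>
    hInt _ ((hφ2Gc.clm_apply (continuousOn_const.prodMk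
      (hu1c.clm_apply continuousOn_const))).clm_apply continuousOn_const) (hA'0 i)
  have hintB : ∀ i : Fin d, Integrable (Bf φ u i) := fun i =>
    hInt _ (hφGc.clm_apply (continuousOn_const.prodMk
      (hu1c.clm_apply continuousOn_const))) (hB0 i)
  have hintB' : ∀ i : Fin d, Integrable (Bder φ u i) := fun i =>
    hInt _ ((hφGc.clm_apply (continuousOn_const.prodMk
        ((hu2c.clm_apply continuousOn_const).clm_apply continuousOn_const))).add
      ((hφ2Gc.clm_apply (continuousOn_const.prodMk
          (hu1c.clm_apply continuousOn_const))).clm_apply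
        (continuousOn_const.prodMk (hu1c.clm_apply continuousOn_const)))) (hB'0 i)
  -- the two integral identities
  have hIA : ∀ i : Fin d, ∫ x, Ader φ u i x = 0 := fun i =>
    key_int (ex d i) (Af φ u i) (Ader φ u i) (hlineA i) (hintA i) (hintA' i)
  have hIB : ∀ i : Fin d, ∫ x, Bder φ u i x = 0 := fun i =>
    key_int (ex d i) (Bf φ u i) (Bder φ u i) (hlineB i) (hintB i) (hintB' i)
  
  -- pointwise algebraic identity per direction
  have hsplit : ∀ (i : Fin d) (v : Euc s),
      ((ex d i : Euc d), v) = ((ex d i, (0:Euc s)) + ((0:Euc d), v) : Euc d × Euc s) := by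
    intro i v; rw [Prod.mk_add_mk, add_zero, zero_add]
  have hBA : ∀ (i : Fin d) (x : Euc d), Bder φ u i x - Ader φ u i x
      = -((fderiv ℝ (fderiv ℝ φ) (x, u x) (ex d i, (0:Euc s))) (ex d i, (0:Euc s)))
        + fderiv ℝ φ (x, u x) ((0:Euc d), fderiv ℝ (fderiv ℝ u) x (ex d i) (ex d i))
        + fderiv ℝ (fderiv ℝ φ) (x, u x) ((0:Euc d), fderiv ℝ u x (ex d i))
            ((0:Euc d), fderiv ℝ u x (ex d i)) := by
    intro i x
    have hsym := (hφ.contDiffAt (x := (x, u x))).isSymmSndFDerivAt (by simp [minSmoothness_of_isRCLikeNormedField])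
    unfold Bder Ader
    rw [hsplit i (fderiv ℝ u x (ex d i))]
    simp only [map_add, ContinuousLinearMap.add_apply]
    rw [hsym ((0:Euc d), fderiv ℝ u x (ex d i)) (ex d i, (0:Euc s))]
    ring
  -- coordinate conversions
  have hT2 : ∀ x : Euc d,
      (∑ k : Fin s, fderiv ℝ φ (x, u x) ((0 : Euc d), ex s k)
          * (∑ i : Fin d, ((fderiv ℝ (fderiv ℝ u) x (ex d i)) (ex d i)) k))
      = ∑ i : Fin d, fderiv ℝ φ (x, u x)
          ((0:Euc d), fderiv ℝ (fderiv ℝ u) x (ex d i) (ex d i)) := by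
    intro x
    calc (∑ k : Fin s, fderiv ℝ φ (x, u x) ((0 : Euc d), ex s k)
          * (∑ i : Fin d, ((fderiv ℝ (fderiv ℝ u) x (ex d i)) (ex d i)) k))
        = ∑ k : Fin s, ∑ i : Fin d, fderiv ℝ φ (x, u x) ((0 : Euc d), ex s k)
            * ((fderiv ℝ (fderiv ℝ u) x (ex d i)) (ex d i)) k :=
          Finset.sum_congr rfl fun k _ => Finset.mul_sum _ _ _
      _ = ∑ i : Fin d, ∑ k : Fin s, fderiv ℝ φ (x, u x) ((0 : Euc d), ex s k)
            * ((fderiv ℝ (fderiv ℝ u) x (ex d i)) (ex d i)) k := Finset.sum_comm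
      _ = ∑ i : Fin d, fderiv ℝ φ (x, u x)
            ((0:Euc d), fderiv ℝ (fderiv ℝ u) x (ex d i) (ex d i)) := by
          refine Finset.sum_congr rfl fun i _ => ?_
          rw [expandF (fderiv ℝ φ (x, u x)) (fderiv ℝ (fderiv ℝ u) x (ex d i) (ex d i))]
          exact Finset.sum_congr rfl fun k _ => mul_comm _ _
  have hT3 : ∀ x : Euc d,
      (∑ k : Fin s, ∑ l : Fin s,
        (fderiv ℝ (fderiv ℝ φ) (x, u x) ((0 : Euc d), ex s k)) ((0 : Euc d), ex s l)
          * (∑ i : Fin d, (fderiv ℝ u x (ex d i)) k * (fderiv ℝ u x (ex d i)) l))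
      = ∑ i : Fin d, fderiv ℝ (fderiv ℝ φ) (x, u x) ((0:Euc d), fderiv ℝ u x (ex d i))
          ((0:Euc d), fderiv ℝ u x (ex d i)) := by
    intro x
    calc (∑ k : Fin s, ∑ l : Fin s,
        (fderiv ℝ (fderiv ℝ φ) (x, u x) ((0 : Euc d), ex s k)) ((0 : Euc d), ex s l)
          * (∑ i : Fin d, (fderiv ℝ u x (ex d i)) k * (fderiv ℝ u x (ex d i)) l))
        = ∑ k : Fin s, ∑ l : Fin s, ∑ i : Fin d,
            (fderiv ℝ u x (ex d i)) k * (fderiv ℝ u x (ex d i)) l *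
              ((fderiv ℝ (fderiv ℝ φ) (x, u x) ((0:Euc d), ex s k)) ((0:Euc d), ex s l)) := by
          refine Finset.sum_congr rfl fun k _ => Finset.sum_congr rfl fun l _ => ?_
          rw [Finset.mul_sum]
          exact Finset.sum_congr rfl fun i _ => by ring
      _ = ∑ k : Fin s, ∑ i : Fin d, ∑ l : Fin s,
            (fderiv ℝ u x (ex d i)) k * (fderiv ℝ u x (ex d i)) l *
              ((fderiv ℝ (fderiv ℝ φ) (x, u x) ((0:Euc d), ex s k)) ((0:Euc d), ex s l)) :=
          Finset.sum_congr rfl fun k _ => Finset.sum_comm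
      _ = ∑ i : Fin d, ∑ k : Fin s, ∑ l : Fin s,
            (fderiv ℝ u x (ex d i)) k * (fderiv ℝ u x (ex d i)) l *
              ((fderiv ℝ (fderiv ℝ φ) (x, u x) ((0:Euc d), ex s k)) ((0:Euc d), ex s l)) :=
          Finset.sum_comm
      _ = ∑ i : Fin d, fderiv ℝ (fderiv ℝ φ) (x, u x) ((0:Euc d), fderiv ℝ u x (ex d i))
            ((0:Euc d), fderiv ℝ u x (ex d i)) :=
          Finset.sum_congr rfl fun i _ =>
            (expandH (fderiv ℝ (fderiv ℝ φ) (x, u x)) _ _).symm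
  -- integrability of the three statement sums
  have hintF1 : Integrable (fun x => ∑ i : Fin d,
      (fderiv ℝ (fderiv ℝ φ) (x, u x) (ex d i, (0:Euc s))) (ex d i, (0:Euc s))) :=
    integrable_finset_sum _ fun i _ => hInt _
      ((hφ2Gc.clm_apply continuousOn_const).clm_apply continuousOn_const)
      (fun x hx => by simp [hzero2 x (u x) hx])
  have hintF2 : Integrable (fun x => ∑ i : Fin d, fderiv ℝ φ (x, u x)
      ((0:Euc d), fderiv ℝ (fderiv ℝ u) x (ex d i) (ex d i))) :=
    integrable_finset_sum _ fun i _ => hInt _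
      (hφGc.clm_apply (continuousOn_const.prodMk
        ((hu2c.clm_apply continuousOn_const).clm_apply continuousOn_const)))
      (fun x hx => by simp [hzero1 x (u x) hx])
  have hintF3 : Integrable (fun x => ∑ i : Fin d, fderiv ℝ (fderiv ℝ φ) (x, u x)
      ((0:Euc d), fderiv ℝ u x (ex d i)) ((0:Euc d), fderiv ℝ u x (ex d i))) :=
    integrable_finset_sum _ fun i _ => hInt _
      ((hφ2Gc.clm_apply (continuousOn_const.prodMk
          (hu1c.clm_apply continuousOn_const))).clm_apply
        (continuousOn_const.prodMk (hu1c.clm_apply continuousOn_const)))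
      (fun x hx => by simp [hzero2 x (u x) hx])
  -- the combined integral vanishes
  have hcomb : ∫ x, ((∑ i : Fin d, Bder φ u i x) - ∑ i : Fin d, Ader φ u i x) = 0 := by
    rw [integral_sub (integrable_finset_sum _ fun i _ => hintB' i)
      (integrable_finset_sum _ fun i _ => hintA' i),
      integral_finset_sum _ fun i _ => hintB' i,
      integral_finset_sum _ fun i _ => hintA' i]
    simp [hIA, hIB]
  have hfinal : ∀ x : Euc d,
      (∑ i : Fin d, Bder φ u i x) - (∑ i : Fin d, Ader φ u i x)
      = -(∑ i : Fin d, (fderiv ℝ (fderiv ℝ φ) (x, u x) (ex d i, (0:Euc s))) (ex d i, (0:Euc s)))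
        + (∑ i : Fin d, fderiv ℝ φ (x, u x)
            ((0:Euc d), fderiv ℝ (fderiv ℝ u) x (ex d i) (ex d i)))
        + (∑ i : Fin d, fderiv ℝ (fderiv ℝ φ) (x, u x) ((0:Euc d), fderiv ℝ u x (ex d i))
            ((0:Euc d), fderiv ℝ u x (ex d i))) := by
    intro x
    rw [← Finset.sum_sub_distrib, Finset.sum_congr rfl fun i _ => hBA i x,
      Finset.sum_add_distrib, Finset.sum_add_distrib, Finset.sum_neg_distrib]
  have hcomb2 : ∫ x, ((∑ i : Fin d, Bder φ u i x) - ∑ i : Fin d, Ader φ u i x)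
      = -(∫ x, ∑ i : Fin d,
            (fderiv ℝ (fderiv ℝ φ) (x, u x) (ex d i, (0:Euc s))) (ex d i, (0:Euc s)))
        + (∫ x, ∑ i : Fin d, fderiv ℝ φ (x, u x)
            ((0:Euc d), fderiv ℝ (fderiv ℝ u) x (ex d i) (ex d i)))
        + (∫ x, ∑ i : Fin d, fderiv ℝ (fderiv ℝ φ) (x, u x) ((0:Euc d), fderiv ℝ u x (ex d i))
            ((0:Euc d), fderiv ℝ u x (ex d i))) := by
    rw [show (fun x => (∑ i : Fin d, Bder φ u i x) - ∑ i : Fin d, Ader φ u i x)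
        = (fun x =>
          -(∑ i : Fin d, (fderiv ℝ (fderiv ℝ φ) (x, u x) (ex d i, (0:Euc s))) (ex d i, (0:Euc s)))
          + (∑ i : Fin d, fderiv ℝ φ (x, u x)
              ((0:Euc d), fderiv ℝ (fderiv ℝ u) x (ex d i) (ex d i)))
          + (∑ i : Fin d, fderiv ℝ (fderiv ℝ φ) (x, u x) ((0:Euc d), fderiv ℝ u x (ex d i))
              ((0:Euc d), fderiv ℝ u x (ex d i)))) from funext hfinal]
    have hN : Integrable (fun x => -(∑ i : Fin d,
        (fderiv ℝ (fderiv ℝ φ) (x, u x) (ex d i, (0:Euc s))) (ex d i, (0:Euc s)))) volume :=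
      hintF1.neg
    have hNF2 : Integrable (fun x =>
        -(∑ i : Fin d,
          (fderiv ℝ (fderiv ℝ φ) (x, u x) (ex d i, (0:Euc s))) (ex d i, (0:Euc s)))
        + (∑ i : Fin d, fderiv ℝ φ (x, u x)
            ((0:Euc d), fderiv ℝ (fderiv ℝ u) x (ex d i) (ex d i)))) volume :=
      hN.add hintF2
    rw [integral_add hNF2 hintF3, integral_add hN hintF2, integral_neg]
  -- rewrite the three set integrals as full integrals
  have hset1 : (∫ x in Ω, ∑ i : Fin d,
        (fderiv ℝ (fderiv ℝ φ) (x, u x) (ex d i, 0)) (ex d i, 0))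
      = ∫ x, ∑ i : Fin d,
        (fderiv ℝ (fderiv ℝ φ) (x, u x) (ex d i, (0:Euc s))) (ex d i, (0:Euc s)) :=
    setIntegral_eq_integral_of_forall_compl_eq_zero fun x hx =>
      Finset.sum_eq_zero fun i _ => by
        simp [hzero2 x (u x) (fun h => hx (hKΩ h))]
  have hset2 : (∫ x in Ω, ∑ k : Fin s,
        fderiv ℝ φ (x, u x) ((0 : Euc d), ex s k)
          * (∑ i : Fin d, ((fderiv ℝ (fderiv ℝ u) x (ex d i)) (ex d i)) k))
      = ∫ x, ∑ i : Fin d, fderiv ℝ φ (x, u x)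
          ((0:Euc d), fderiv ℝ (fderiv ℝ u) x (ex d i) (ex d i)) := by
    simp only [hT2]
    exact setIntegral_eq_integral_of_forall_compl_eq_zero fun x hx =>
      Finset.sum_eq_zero fun i _ => by
        simp [hzero1 x (u x) (fun h => hx (hKΩ h))]
  have hset3 : (∫ x in Ω, ∑ k : Fin s, ∑ l : Fin s,
        (fderiv ℝ (fderiv ℝ φ) (x, u x) ((0 : Euc d), ex s k)) ((0 : Euc d), ex s l)
          * (∑ i : Fin d, (fderiv ℝ u x (ex d i)) k * (fderiv ℝ u x (ex d i)) l))
      = ∫ x, ∑ i : Fin d, fderiv ℝ (fderiv ℝ φ) (x, u x) ((0:Euc d), fderiv ℝ u x (ex d i))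
          ((0:Euc d), fderiv ℝ u x (ex d i)) := by
    simp only [hT3]
    exact setIntegral_eq_integral_of_forall_compl_eq_zero fun x hx =>
      Finset.sum_eq_zero fun i _ => by
        simp [hzero2 x (u x) (fun h => hx (hKΩ h))]
  rw [hset1, hset2, hset3, ← hcomb2]
  exact hcomb
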